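/- The Alexander-dual ideal I_{Δ^∨} has linear relations if and only if, for every pair of facets F, G of Δ, the subcomplex Δ^{(F,G)} is connected in codimension one. -/

import Mathlib

open MvPolynomial Finset

attribute [local instance] Classical.propDecidable

/-- The (first linear) syzygy graph of a squarefree monomial ideal whose generators
have supports `F i`, all of cardinality `d`: vertices are the generators, and two
generators are adjacent iff their supports meet in `d - 1` elements (equivalently,
there are variables `x, y` with `x * u i = y * u j`). -/
def syzGraph {n m : ℕ} (F : Fin m → Finset (Fin n)) (d : ℕ) : SimpleGraph (Fin m) where
  Adj i j := i ≠ j ∧ (F i ∩ F j).card + 1 = d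
  symm := by
    constructor
    intro i j h
    exact ⟨h.1.symm, by rw [Finset.inter_comm]; exact h.2⟩
  loopless := by constructor; intro i h; exact h.1 rfl

/-- The map `φ : S^ι → S`, `e i ↦ u i`. -/
noncomputable def phi {R : Type*} [CommRing R] {ι : Type*} [Fintype ι] (u : ι → R) :
    (ι → R) →ₗ[R] R where
  toFun c := ∑ i, c i * u i
  map_add' a b := by simp [add_mul, Finset.sum_add_distrib]
  map_smul' r a := by simp [Finset.mul_sum, mul_assoc]

/-- The set of linear syzygies `x_a e_i - x_b e_j` with `x_a u_i = x_b u_j`. -/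
def linSyz {k : Type*} [Field k] {n : ℕ} {ι : Type*} [DecidableEq ι]
    (u : ι → MvPolynomial (Fin n) k) : Set (ι → MvPolynomial (Fin n) k) :=
  { w | ∃ (i j : ι) (a b : Fin n), X a * u i = X b * u j ∧
      w = Pi.single i (X a) - Pi.single j (X b) }

/-- `I = (u i : i)` has linear relations: `ker φ` is generated by the linear syzygies. -/
def HasLinRel {k : Type*} [Field k] {n : ℕ} {ι : Type*} [Fintype ι] [DecidableEq ι]
    (u : ι → MvPolynomial (Fin n) k) : Prop :=
  Submodule.span (MvPolynomial (Fin n) k) (linSyz u) = LinearMap.ker (phi u)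

/-- `I = (u 1, …, u m)` has linear quotients: for some ordering of the generators, each
colon ideal `(u_{σ 1}, …, u_{σ (i-1)}) : u_{σ i}` is generated by a subset of the variables. -/
def LinQuot {k : Type*} [Field k] {n m : ℕ} (u : Fin m → MvPolynomial (Fin n) k) : Prop :=
  ∃ σ : Equiv.Perm (Fin m), ∀ i : Fin m, i.val ≠ 0 →
    ∃ T : Set (Fin n),
      Submodule.colon (Ideal.span ((fun j => u (σ j)) '' {j : Fin m | j < i}))
        (Ideal.span {u (σ i)}) = Ideal.span (X '' T)

/-- Variable-decomposability of a monomial ideal given by its (finite) minimal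
generating set `G`: either `G` is a singleton (principal ideal), or there is a shedding
variable `x l` such that both `I_{x l}` and `I^{x l}` are variable-decomposable. -/
inductive VarDecomp {k : Type*} [Field k] {n : ℕ} :
    Finset (MvPolynomial (Fin n) k) → Prop
  | principal (u : MvPolynomial (Fin n) k) : VarDecomp {u}
  | shed (G : Finset (MvPolynomial (Fin n) k)) (l : Fin n)
      (hne : (G.filter fun u => ¬ X l ∣ u).Nonempty)
      (hshed : ∀ u ∈ G.filter (fun u => ¬ X l ∣ u),
        ∃ v ∈ G.filter (fun u => X l ∣ u),
          Submodule.colon (Ideal.span {v}) (Ideal.span {u}) = Ideal.span {X l})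
      (h1 : VarDecomp (G.filter fun u => ¬ X l ∣ u))
      (h2 : VarDecomp (G.filter fun u => X l ∣ u)) : VarDecomp G

/-!
For monomial generators `u i = x^(d i)`, the kernel of `phi` is spanned by the binomial syzygies
`x^e e_i - x^f e_j` with `x^e u_i = x^f u_j`, and for `u i = x_{F̄ i}` each of these is a monomial
multiple of `x_{F i \ F j} e_i - x_{F j \ F i} e_j`. If the facets containing `F i ∩ F j` are
connected in codimension one, this syzygy telescopes along a path of adjacent facets, each step
being a monomial multiple of a linear syzygy.

Conversely, fix `A ⊆ F a ∩ F b` and let `C` be the set of facets reachable from `F a` through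
facets containing `A`. The `k`-linear functional `w ↦ ∑_{t ∈ C} coeff_{x_{F t \ A}} (w t)` vanishes
on every multiple of a linear syzygy, but takes the value `1 - [b ∈ C]` on the syzygy
`x_{F a \ A} e_a - x_{F b \ A} e_b`. Linear relations therefore force `b ∈ C`.
-/

section SquarefreeExponents

variable {σ : Type*}

noncomputable def sqfreeExp (s : Finset σ) : σ →₀ ℕ := ∑ a ∈ s, Finsupp.single a 1

theorem prod_X_eq_monomial_sqfreeExp {R : Type*} [CommSemiring R] (s : Finset σ) :
    ∏ a ∈ s, (X a : MvPolynomial σ R) = monomial (sqfreeExp s) 1 := by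
  rw [sqfreeExp, monomial_sum_one]
  rfl

variable [DecidableEq σ]

theorem sqfreeExp_apply (s : Finset σ) (a : σ) : sqfreeExp s a = if a ∈ s then 1 else 0 := by
  simp [sqfreeExp, Finsupp.finsetSum_apply, Finsupp.single_apply]

theorem sqfreeExp_sdiff_of_sdiff_eq_singleton {s t A : Finset σ} {x : σ} (hst : s \ t = {x})
    (hx : x ∉ A) : sqfreeExp (s \ A) = Finsupp.single x 1 + sqfreeExp ((s ∩ t) \ A) := by
  ext a
  have := Finset.ext_iff.1 hst a
  simp only [Finsupp.add_apply, sqfreeExp_apply, Finsupp.single_apply, mem_sdiff, mem_inter,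
    mem_singleton] at this ⊢
  grind

theorem coeff_sqfreeExp_sdiff_mul_X {R : Type*} [CommSemiring R] {s t A : Finset σ} {x : σ}
    (hst : s \ t = {x}) (p : MvPolynomial σ R) :
    coeff (sqfreeExp (s \ A)) (p * X x) =
      if x ∈ A then 0 else coeff (sqfreeExp ((s ∩ t) \ A)) p := by
  split_ifs with hxA
  · rw [coeff_mul_X', if_neg]
    simp [sqfreeExp_apply, hxA]
  · rw [sqfreeExp_sdiff_of_sdiff_eq_singleton hst hxA, add_comm, coeff_mul_X]

variable [Fintype σ]

theorem sqfreeExp_sdiff_add_sqfreeExp_compl {s A : Finset σ} (h : A ⊆ s) :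
    sqfreeExp (s \ A) + sqfreeExp (univ \ s) = sqfreeExp (univ \ A) := by
  ext a
  by_cases hs : a ∈ s <;> by_cases hA : a ∈ A <;> simp [sqfreeExp_apply, hs, hA]
  exact hs (h hA)

theorem single_add_sqfreeExp_compl_eq_iff {s t : Finset σ} {x y : σ} :
    Finsupp.single x 1 + sqfreeExp (univ \ s) = Finsupp.single y 1 + sqfreeExp (univ \ t) ↔
      x = y ∧ s = t ∨ s \ t = {x} ∧ t \ s = {y} := by
  simp only [Finsupp.ext_iff, Finset.ext_iff, Finsupp.add_apply, sqfreeExp_apply,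
    Finsupp.single_apply, mem_sdiff, mem_univ, true_and, mem_singleton]
  constructor
  · intro h
    by_cases hxy : x = y
    · subst hxy
      exact Or.inl ⟨rfl, fun a => by grind⟩
    · have := h x
      have := h y
      grind
  · grind

theorem exists_eq_add_sqfreeExp_sdiff {s t : Finset σ} {e f : σ →₀ ℕ}
    (h : e + sqfreeExp (univ \ s) = f + sqfreeExp (univ \ t)) :
    ∃ g, e = g + sqfreeExp (s \ t) ∧ f = g + sqfreeExp (t \ s) := by
  refine ⟨e - sqfreeExp (s \ t), ?_, ?_⟩ <;> ext a <;> have := DFunLike.congr_fun h a <;>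
    by_cases hs : a ∈ s <;> by_cases ht : a ∈ t <;>
    simp [sqfreeExp_apply, hs, ht] at this ⊢ <;> omega

end SquarefreeExponents

section MonomialSyzygies

variable {σ R ι : Type*} [CommRing R] [Fintype ι]

theorem coeff_phi_monomial (d : ι → σ →₀ ℕ) (D : σ →₀ ℕ) (w : ι → MvPolynomial σ R) :
    coeff D (phi (fun i => monomial (d i) 1) w) =
      ∑ i ∈ univ.filter (d · ≤ D), coeff (D - d i) (w i) := by
  simp [phi, coeff_sum, coeff_mul_monomial', Finset.sum_filter]

variable [DecidableEq ι]

theorem phi_single (u : ι → R) (i : ι) (p : R) : phi u (Pi.single i p) = p * u i := by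
  simp [phi, Pi.single_apply]

def binomialSyz (d : ι → σ →₀ ℕ) : Set (ι → MvPolynomial σ R) :=
  {w | ∃ i j e f, e + d i = f + d j ∧
    w = Pi.single i (monomial e 1) - Pi.single j (monomial f 1)}

/-- The summand of `w` that `phi` sends to the terms of multidegree `D`. -/
noncomputable def degreePart (d : ι → σ →₀ ℕ) (D : σ →₀ ℕ) (w : ι → MvPolynomial σ R) :
    ι → MvPolynomial σ R :=
  ∑ i ∈ univ.filter (d · ≤ D), Pi.single i (monomial (D - d i) (coeff (D - d i) (w i)))

theorem degreePart_apply (d : ι → σ →₀ ℕ) (D : σ →₀ ℕ) (w : ι → MvPolynomial σ R) (t : ι) :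
    degreePart d D w t = if d t ≤ D then monomial (D - d t) (coeff (D - d t) (w t)) else 0 := by
  simp [degreePart, Finset.sum_apply, Pi.single_apply]

theorem degreePart_mem_span {d : ι → σ →₀ ℕ} {D : σ →₀ ℕ} {w : ι → MvPolynomial σ R}
    (hw : coeff D (phi (fun i => monomial (d i) 1) w) = 0) :
    degreePart d D w ∈ Submodule.span (MvPolynomial σ R) (binomialSyz d) := by
  set s := univ.filter (d · ≤ D)
  rcases s.eq_empty_or_nonempty with hs | ⟨i₀, hi₀⟩
  · simp [degreePart, s, hs]
  set c : ι → R := fun i => coeff (D - d i) (w i)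
  set b : ι → ι → MvPolynomial σ R := fun i => Pi.single i (monomial (D - d i) 1)
  have hsum : ∑ i ∈ s, c i = 0 := by rwa [coeff_phi_monomial] at hw
  have hb : ∀ i ∈ s, b i - b i₀ ∈ binomialSyz d := fun i hi =>
    ⟨i, i₀, D - d i, D - d i₀, by
      rw [tsub_add_cancel_of_le (mem_filter.1 hi).2, tsub_add_cancel_of_le (mem_filter.1 hi₀).2],
      rfl⟩
  have hpart : degreePart d D w = ∑ i ∈ s, c i • (b i - b i₀) := by
    simp only [smul_sub, Finset.sum_sub_distrib, ← Finset.sum_smul, hsum, zero_smul, sub_zero]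
    refine Finset.sum_congr rfl fun i _ => ?_
    simp [b, c, ← Pi.single_smul', smul_monomial]
  rw [hpart]
  exact Submodule.sum_mem _ fun i hi =>
    Submodule.smul_of_tower_mem _ _ (Submodule.subset_span (hb i hi))

theorem support_sub_monomial_coeff (p : MvPolynomial σ R) (e : σ →₀ ℕ) :
    (p - monomial e (coeff e p)).support = p.support.erase e := by
  ext e'
  by_cases h : e' = e
  · subst h; simp
  · simp [coeff_monomial, h, Ne.symm h]

theorem card_support_sub_degreePart_lt {d : ι → σ →₀ ℕ} {w : ι → MvPolynomial σ R} {i₀ : ι}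
    {e₀ : σ →₀ ℕ} (he₀ : e₀ ∈ (w i₀).support) :
    ∑ t, ((w - degreePart d (e₀ + d i₀) w) t).support.card < ∑ t, (w t).support.card := by
  have hsupp : ∀ t, ((w - degreePart d (e₀ + d i₀) w) t).support =
      if d t ≤ e₀ + d i₀ then (w t).support.erase (e₀ + d i₀ - d t) else (w t).support := by
    intro t
    rw [Pi.sub_apply, degreePart_apply]
    split_ifs
    · exact support_sub_monomial_coeff _ _
    · rw [sub_zero]
  refine Finset.sum_lt_sum (fun t _ => ?_) ⟨i₀, mem_univ _, ?_⟩
  · rw [hsupp]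
    split_ifs
    exacts [card_le_card (erase_subset _ _), le_rfl]
  · rw [hsupp, if_pos le_add_self, add_tsub_cancel_right]
    exact card_erase_lt_of_mem he₀

theorem span_binomialSyz_le_ker (d : ι → σ →₀ ℕ) :
    Submodule.span (MvPolynomial σ R) (binomialSyz d) ≤
      LinearMap.ker (phi (fun i => monomial (d i) (1 : R))) := by
  rw [Submodule.span_le]
  rintro w ⟨i, j, e, f, h, rfl⟩
  simp [phi_single, monomial_mul, h]

theorem ker_phi_monomial_le_span (d : ι → σ →₀ ℕ) :
    LinearMap.ker (phi (fun i => monomial (d i) (1 : R))) ≤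
      Submodule.span (MvPolynomial σ R) (binomialSyz d) := by
  intro w hw
  induction h : ∑ t, (w t).support.card using Nat.strong_induction_on generalizing w with
  | _ N ih =>
    by_cases hw₀ : w = 0
    · exact hw₀ ▸ zero_mem _
    obtain ⟨i₀, hi₀⟩ := Function.ne_iff.1 hw₀
    obtain ⟨e₀, he₀⟩ := support_nonempty.2 hi₀
    have hD : coeff (e₀ + d i₀) (phi (fun i => monomial (d i) 1) w) = 0 := by
      rw [LinearMap.mem_ker.1 hw, coeff_zero]
    have hpart := degreePart_mem_span hD
    have hrest :
        w - degreePart d (e₀ + d i₀) w ∈ LinearMap.ker (phi fun i => monomial (d i) 1) :=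
      sub_mem hw (span_binomialSyz_le_ker d hpart)
    rw [← sub_add_cancel w (degreePart d (e₀ + d i₀) w)]
    exact add_mem (ih _ (h ▸ card_support_sub_degreePart_lt he₀) hrest rfl) hpart

theorem span_linSyz_le_ker_phi {k : Type*} [Field k] {n : ℕ} (u : ι → MvPolynomial (Fin n) k) :
    Submodule.span (MvPolynomial (Fin n) k) (linSyz u) ≤ LinearMap.ker (phi u) := by
  rw [Submodule.span_le]
  rintro w ⟨i, j, a, b, h, rfl⟩
  simp [phi_single, h]

end MonomialSyzygies

section Facets

variable {k : Type*} [Field k] {n m c : ℕ} {F : Fin m → Finset (Fin n)}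

variable (k F) in
noncomputable def alexGen (i : Fin m) : MvPolynomial (Fin n) k := ∏ a ∈ univ \ F i, X a

theorem alexGen_eq : alexGen k F = fun i => monomial (sqfreeExp (univ \ F i)) 1 :=
  funext fun _ => prod_X_eq_monomial_sqfreeExp _

theorem X_mul_alexGen_eq_iff {i j : Fin m} {x y : Fin n} :
    X x * alexGen k F i = X y * alexGen k F j ↔
      x = y ∧ F i = F j ∨ F i \ F j = {x} ∧ F j \ F i = {y} := by
  simp only [alexGen_eq, X, monomial_mul, one_mul, monomial_left_inj one_ne_zero]
  exact single_add_sqfreeExp_compl_eq_iff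

theorem syzGraph_adj_iff (hpure : ∀ i, (F i).card = c) {i j : Fin m} :
    (syzGraph F c).Adj i j ↔ ∃ x y, F i \ F j = {x} ∧ F j \ F i = {y} := by
  have hi : #(F i ∩ F j) + #(F i \ F j) = c := hpure i ▸ card_inter_add_card_sdiff _ _
  have hj : #(F i ∩ F j) + #(F j \ F i) = c := by
    rw [inter_comm, ← hpure j]
    exact card_inter_add_card_sdiff _ _
  change i ≠ j ∧ _ ↔ _
  constructor
  · rintro ⟨-, h⟩
    obtain ⟨x, hx⟩ := card_eq_one.1 (by omega : #(F i \ F j) = 1)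
    obtain ⟨y, hy⟩ := card_eq_one.1 (by omega : #(F j \ F i) = 1)
    exact ⟨x, y, hx, hy⟩
  · rintro ⟨x, y, hx, hy⟩
    refine ⟨fun hij => ?_, ?_⟩
    · simp [hij] at hx
    · have := card_eq_one.2 ⟨x, hx⟩
      omega

variable (k F) in
/-- For `A ⊆ F t`, the lift of `x_{univ \ A}` through the `t`-th generator. -/
noncomputable def scaledBasis (A : Finset (Fin n)) (t : Fin m) : Fin m → MvPolynomial (Fin n) k :=
  Pi.single t (monomial (sqfreeExp (F t \ A)) 1)

theorem scaledBasis_sub_mem_ker {A : Finset (Fin n)} {a b : Fin m} (ha : A ⊆ F a)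
    (hb : A ⊆ F b) :
    scaledBasis k F A a - scaledBasis k F A b ∈ LinearMap.ker (phi (alexGen k F)) := by
  simp only [LinearMap.mem_ker, map_sub, scaledBasis, phi_single, alexGen_eq, monomial_mul,
    one_mul, sqfreeExp_sdiff_add_sqfreeExp_compl ha, sqfreeExp_sdiff_add_sqfreeExp_compl hb,
    sub_self]

theorem scaledBasis_sub_mem_span_of_adj (hpure : ∀ i, (F i).card = c) {A : Finset (Fin n)}
    {p q : Fin m} (hp : A ⊆ F p) (hq : A ⊆ F q) (hadj : (syzGraph F c).Adj p q) :
    scaledBasis k F A p - scaledBasis k F A q ∈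
      Submodule.span (MvPolynomial (Fin n) k) (linSyz (alexGen k F)) := by
  obtain ⟨x, y, hx, hy⟩ := (syzGraph_adj_iff hpure).1 hadj
  have hxA : x ∉ A := fun h => (mem_sdiff.1 (hx ▸ mem_singleton_self x)).2 (hq h)
  have hyA : y ∉ A := fun h => (mem_sdiff.1 (hy ▸ mem_singleton_self y)).2 (hp h)
  have hsyz : (Pi.single p (X x) - Pi.single q (X y) : Fin m → MvPolynomial (Fin n) k) ∈
      linSyz (alexGen k F) :=
    ⟨p, q, x, y, X_mul_alexGen_eq_iff.2 (Or.inr ⟨hx, hy⟩), rfl⟩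
  have hfactor : scaledBasis k F A p - scaledBasis k F A q =
      monomial (sqfreeExp ((F p ∩ F q) \ A)) (1 : k) •
        (Pi.single p (X x) - Pi.single q (X y) : Fin m → MvPolynomial (Fin n) k) := by
    rw [smul_sub, ← Pi.single_smul', ← Pi.single_smul', smul_eq_mul, smul_eq_mul, X, X,
      monomial_mul, monomial_mul, mul_one, scaledBasis, scaledBasis,
      sqfreeExp_sdiff_of_sdiff_eq_singleton hx hxA, sqfreeExp_sdiff_of_sdiff_eq_singleton hy hyA,
      inter_comm (F q), add_comm, add_comm (Finsupp.single y 1)]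
  rw [hfactor]
  exact Submodule.smul_mem _ _ (Submodule.subset_span hsyz)

theorem scaledBasis_sub_mem_span_of_reachable (hpure : ∀ i, (F i).card = c)
    {A : Finset (Fin n)} {p q : {t | A ⊆ F t}}
    (h : ((syzGraph F c).induce {t | A ⊆ F t}).Reachable p q) :
    scaledBasis k F A p - scaledBasis k F A q ∈
      Submodule.span (MvPolynomial (Fin n) k) (linSyz (alexGen k F)) := by
  obtain ⟨w⟩ := h
  induction w with
  | nil => simp
  | @cons p p' q hadj _ ih =>
    rw [← sub_add_sub_cancel _ (scaledBasis k F A p')]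
    exact add_mem (scaledBasis_sub_mem_span_of_adj hpure p.2 p'.2 hadj) ih

theorem binomialSyz_subset_span_linSyz (hpure : ∀ i, (F i).card = c)
    (hconn : ∀ a b, ((syzGraph F c).induce {i | F a ∩ F b ⊆ F i}).Connected) :
    binomialSyz (fun i => sqfreeExp (univ \ F i)) ⊆
      (Submodule.span (MvPolynomial (Fin n) k) (linSyz (alexGen k F)) :
        Set (Fin m → MvPolynomial (Fin n) k)) := by
  rintro w ⟨i, j, e, f, h, rfl⟩
  obtain ⟨g, rfl, rfl⟩ := exists_eq_add_sqfreeExp_sdiff h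
  rw [SetLike.mem_coe]
  have hmem := scaledBasis_sub_mem_span_of_reachable (k := k) hpure
    ((hconn i j).preconnected ⟨i, inter_subset_left⟩ ⟨j, inter_subset_right⟩)
  rw [scaledBasis, scaledBasis, sdiff_inter_self_left, sdiff_inter_self_right] at hmem
  convert Submodule.smul_mem _ (monomial g (1 : k)) hmem using 1
  rw [smul_sub, ← Pi.single_smul', ← Pi.single_smul', smul_eq_mul, smul_eq_mul, monomial_mul,
    monomial_mul, one_mul]

theorem hasLinRel_of_connected (hpure : ∀ i, (F i).card = c)
    (hconn : ∀ a b, ((syzGraph F c).induce {i | F a ∩ F b ⊆ F i}).Connected) :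
    HasLinRel (alexGen k F) := by
  refine le_antisymm (span_linSyz_le_ker_phi _) ?_
  have hker := ker_phi_monomial_le_span (R := k) fun i => sqfreeExp (univ \ F i)
  rw [← alexGen_eq] at hker
  exact hker.trans (Submodule.span_le.2 (binomialSyz_subset_span_linSyz hpure hconn))

variable (k F) in
noncomputable def coeffSum (A : Finset (Fin n)) (C : Finset (Fin m)) :
    (Fin m → MvPolynomial (Fin n) k) →ₗ[k] k :=
  ∑ t ∈ C, (lcoeff k (sqfreeExp (F t \ A))).comp (LinearMap.proj t)

theorem coeffSum_single (A : Finset (Fin n)) (C : Finset (Fin m)) (t : Fin m)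
    (p : MvPolynomial (Fin n) k) :
    coeffSum k F A C (Pi.single t p) = if t ∈ C then coeff (sqfreeExp (F t \ A)) p else 0 := by
  simp [coeffSum, Pi.single_apply, apply_ite (coeff _), Finset.sum_ite_eq']

theorem coeffSum_scaledBasis (A : Finset (Fin n)) (C : Finset (Fin m)) (t : Fin m) :
    coeffSum k F A C (scaledBasis k F A t) = if t ∈ C then 1 else 0 := by
  simp [scaledBasis, coeffSum_single]

theorem mem_and_notMem_of_sdiff_eq_singleton (hpure : ∀ i, (F i).card = c)
    {A : Finset (Fin n)} {C : Finset (Fin m)} (hCA : ∀ t ∈ C, A ⊆ F t)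
    (hC : ∀ i j, A ⊆ F j → (syzGraph F c).Adj i j → i ∈ C → j ∈ C) {i j : Fin m} {x y : Fin n}
    (hx : F i \ F j = {x}) (hy : F j \ F i = {y}) (h : i ∈ C ∧ x ∉ A) : j ∈ C ∧ y ∉ A := by
  have hAj : A ⊆ F j := fun a ha => by
    by_contra haj
    have : a ∈ F i \ F j := mem_sdiff.2 ⟨hCA i h.1 ha, haj⟩
    exact h.2 (mem_singleton.1 (hx ▸ this) ▸ ha)
  refine ⟨hC i j hAj ((syzGraph_adj_iff hpure).2 ⟨x, y, hx, hy⟩) h.1, fun hyA => ?_⟩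
  exact (mem_sdiff.1 (hy ▸ mem_singleton_self y)).2 (hCA i h.1 hyA)

theorem coeffSum_smul_eq_zero (hinj : Function.Injective F) (hpure : ∀ i, (F i).card = c)
    {A : Finset (Fin n)} {C : Finset (Fin m)} (hCA : ∀ t ∈ C, A ⊆ F t)
    (hC : ∀ i j, A ⊆ F j → (syzGraph F c).Adj i j → i ∈ C → j ∈ C)
    (r : MvPolynomial (Fin n) k) {s : Fin m → MvPolynomial (Fin n) k}
    (hs : s ∈ linSyz (alexGen k F)) : coeffSum k F A C (r • s) = 0 := by
  obtain ⟨i, j, x, y, h, rfl⟩ := hs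
  rcases X_mul_alexGen_eq_iff.1 h with ⟨rfl, hij⟩ | ⟨hx, hy⟩
  · obtain rfl := hinj hij
    simp
  have hterm : ∀ {i j x}, F i \ F j = {x} → coeffSum k F A C (r • Pi.single i (X x)) =
      if i ∈ C ∧ x ∉ A then coeff (sqfreeExp ((F i ∩ F j) \ A)) r else 0 := by
    intro i j x hx
    rw [← Pi.single_smul', coeffSum_single, smul_eq_mul, coeff_sqfreeExp_sdiff_mul_X hx]
    by_cases hxA : x ∈ A <;> simp [hxA]
  rw [smul_sub, map_sub, hterm hx, hterm hy, inter_comm,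
    if_congr ⟨mem_and_notMem_of_sdiff_eq_singleton hpure hCA hC hx hy,
      mem_and_notMem_of_sdiff_eq_singleton hpure hCA hC hy hx⟩ rfl rfl, sub_self]

theorem reachable_of_hasLinRel (hinj : Function.Injective F) (hpure : ∀ i, (F i).card = c)
    (hlin : HasLinRel (alexGen k F)) {A : Finset (Fin n)} {a b : Fin m} (ha : A ⊆ F a)
    (hb : A ⊆ F b) :
    ((syzGraph F c).induce {t | A ⊆ F t}).Reachable ⟨a, ha⟩ ⟨b, hb⟩ := by
  set G := (syzGraph F c).induce {t | A ⊆ F t}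
  let C : Finset (Fin m) := univ.filter fun t => ∃ ht : A ⊆ F t, G.Reachable ⟨a, ha⟩ ⟨t, ht⟩
  have hCA : ∀ t ∈ C, A ⊆ F t := fun t ht => (mem_filter.1 ht).2.1
  have hC : ∀ i j, A ⊆ F j → (syzGraph F c).Adj i j → i ∈ C → j ∈ C := by
    intro i j hj hadj hi
    obtain ⟨_, hreach⟩ := (mem_filter.1 hi).2
    exact mem_filter.2 ⟨mem_univ _, hj, hreach.trans (SimpleGraph.Adj.reachable hadj)⟩
  have hvanish : ∀ w ∈ Submodule.span (MvPolynomial (Fin n) k) (linSyz (alexGen k F)),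
      coeffSum k F A C w = 0 := by
    intro w hw
    obtain ⟨N, f, g, rfl⟩ := Submodule.mem_span_set'.1 hw
    simp [map_sum, coeffSum_smul_eq_zero hinj hpure hCA hC _ (g _).2]
  have haC : a ∈ C := mem_filter.2 ⟨mem_univ _, ha, .rfl⟩
  have hτ := hvanish _ (hlin ▸ scaledBasis_sub_mem_ker ha hb)
  rw [map_sub, coeffSum_scaledBasis, coeffSum_scaledBasis, if_pos haC] at hτ
  by_cases hbC : b ∈ C
  · exact (mem_filter.1 hbC).2.2
  · simp [hbC] at hτ

end Facets

/-- Let `Δ` be a pure simplicial complex with facets `Fc 0, …, Fc (m-1)`,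
all of cardinality `c`. The Alexander-dual ideal `I_{Δ^∨}`, generated by the monomials
`x_{complement of Fc i}`, has linear relations iff for every pair of facets `Fc a, Fc b`
the subcomplex `Δ^{(Fc a, Fc b)}` (generated by the facets containing `Fc a ∩ Fc b`) is
connected in codimension one, i.e. the corresponding induced facet graph is connected. -/
theorem stmt17 {k : Type*} [Field k] {n m c : ℕ}
    (Fc : Fin m → Finset (Fin n)) (hinj : Function.Injective Fc)
    (hpure : ∀ i, (Fc i).card = c) :
    HasLinRel (fun i : Fin m =>
        ∏ a ∈ Finset.univ \ Fc i, (X a : MvPolynomial (Fin n) k)) ↔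
      ∀ a b : Fin m,
        ((syzGraph Fc c).induce {i : Fin m | Fc a ∩ Fc b ⊆ Fc i}).Connected := by
  refine ⟨fun hlin a b => ?_, hasLinRel_of_connected hpure⟩
  rw [SimpleGraph.connected_iff]
  exact ⟨fun p q => reachable_of_hasLinRel hinj hpure hlin p.2 q.2, ⟨⟨a, inter_subset_left⟩⟩⟩
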